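/- If for every pressure basis element χ_i (i = 1,...,m) the supremizer s_i ∈ V satisfies ⟨s_i, v⟩ = b(v, χ_i) for all v ∈ V and s_i ≠ 0, and the reduced velocity space V_r contains all s_i, then the reduced inf-sup constant over span{χ_1,...,χ_m} is positive: inf over nonzero q in span{χ_i} of sup_{v ∈ V_r, v≠0} b(v,q)/(‖v‖‖q‖) > 0, provided the map q ↦ (its Riesz supremizer) is injective on span{χ_i}. -/
import Mathlib


open scoped RealInnerProductSpace

set_option maxHeartbeats 1000000 in
set_option synthInstance.maxHeartbeats 400000 in
theorem supremizer_enrichment_inf_sup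
    {V Q : Type*} [NormedAddCommGroup V] [InnerProductSpace ℝ V]
    [NormedAddCommGroup Q] [InnerProductSpace ℝ Q]
    [FiniteDimensional ℝ V] [FiniteDimensional ℝ Q]
    (b : V →ₗ[ℝ] Q →ₗ[ℝ] ℝ)
    {m : ℕ} (χ : Fin m → Q) (hχ : LinearIndependent ℝ χ)
    (T : Q →ₗ[ℝ] V) (hT : ∀ (qq : Q) (v : V), ⟪T qq, v⟫ = b v qq)
    (hsne : ∀ i, T (χ i) ≠ 0)
    (Vr : Submodule ℝ V) (hVr : ∀ i, T (χ i) ∈ Vr)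
    (hTinj : ∀ qq ∈ Submodule.span ℝ (Set.range χ), T qq = 0 → qq = 0) :
    ∃ β > (0 : ℝ), ∀ q ∈ Submodule.span ℝ (Set.range χ), q ≠ 0 →
      ∃ v ∈ Vr, v ≠ 0 ∧ β * (‖v‖ * ‖q‖) ≤ b v q := by
  set S := Submodule.span ℝ (Set.range χ) with hS
  let T' : S →ₗ[ℝ] V := T.comp S.subtype
  have hinj : Function.Injective T' := by
    rw [← LinearMap.ker_eq_bot, LinearMap.ker_eq_bot']
    intro x hx
    have := hTinj x.1 x.2 hx
    exact Subtype.ext this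
  let e := LinearEquiv.ofInjective T' hinj
  let ec := e.toContinuousLinearEquiv
  set C : ℝ := ‖(ec.symm : LinearMap.range T' →L[ℝ] S)‖ with hC
  have hC0 : 0 ≤ C := hC ▸ ContinuousLinearMap.opNorm_nonneg _
  refine ⟨(C + 1)⁻¹, by positivity, ?_⟩
  intro q hq hq0
  have hTq0 : T q ≠ 0 := fun h => hq0 (hTinj q hq h)
  have hTqVr : T q ∈ Vr := by
    have : S ≤ Vr.comap T := by
      rw [hS, Submodule.span_le]
      rintro _ ⟨i, rfl⟩
      exact hVr i
    exact this hq
  refine ⟨T q, hTqVr, hTq0, ?_⟩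
  have hb : (b (T q)) q = ‖T q‖ ^ 2 := by
    rw [← hT q (T q), real_inner_self_eq_norm_sq]
  rw [hb]
  -- key bound: ‖q‖ ≤ C * ‖T q‖
  have hkey : ‖q‖ ≤ C * ‖T q‖ := by
    set qs : S := ⟨q, hq⟩
    have h1 : ‖qs‖ ≤ C * ‖ec qs‖ := by
      have := (ec.symm : LinearMap.range T' →L[ℝ] S).le_opNorm (ec qs)
      simpa using this
    have h2 : ‖(ec qs : V)‖ = ‖T q‖ := by
      have : ((ec qs : LinearMap.range T') : V) = T q := rfl
      rw [this]
    have h3 : ‖ec qs‖ = ‖T q‖ := by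
      rw [← h2]; rfl
    have h4 : ‖qs‖ = ‖q‖ := rfl
    rw [h4, h3] at h1
    exact h1
  have h5 : ‖T q‖ * ‖q‖ ≤ (C + 1) * ‖T q‖ ^ 2 := by nlinarith [norm_nonneg (T q), sq_nonneg (‖T q‖)]
  have hCpos : (0:ℝ) < C + 1 := by positivity
  calc (C + 1)⁻¹ * (‖T q‖ * ‖q‖) ≤ (C + 1)⁻¹ * ((C + 1) * ‖T q‖ ^ 2) := by
        exact mul_le_mul_of_nonneg_left h5 (by positivity)
    _ = ‖T q‖ ^ 2 := by field_simp
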